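/- Subadditivity of KPP solutions. Let u₁, u₂ and u₃ be solutions of the KPP equation with nonnegative bounded initial conditions. If u₃(0,x) ≤ u₁(0,x) + u₂(0,x) for all x ∈ ℝ, then u₃(t,x) ≤ u₁(t,x) + u₂(t,x) for all t > 0 and x ∈ ℝ. -/

import Mathlib

/-!
Put `w = u₁ + u₂ - u₃`. The function `λ ↦ ψ(λ) + λ = βλ² + ∫ (e^{-λy} - 1 + λy) n(dy)` is
nonnegative and superadditive on `[0, ∞)`, hence nondecreasing there; so wherever `w < 0`, i.e.
`u₁ + u₂ < u₃`, the equation gives `(∂ₜ - ½∂ₓ²) w = ψ(u₃) - ψ(u₁) - ψ(u₂) ≥ w`.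
A minimum principle for such one-sided supersolutions carries `w(0, ·) ≥ 0` forward in time:
for a suitable `c` the penalised function `e^{-ct} w + ε(1 + x²)` is coercive in `x`, so if it
became nonpositive on `[0, T] × ℝ` it would attain a nonpositive minimum at some `t > 0`, where
`∂ₜ ≤ 0` and `∂ₓ² ≥ 0` contradict the supersolution inequality.
-/

open MeasureTheory Set Filter Topology

/-- The branching mechanism ψ(λ) = −λ + βλ² + ∫₀^∞ (e^{−λy} − 1 + λy) n(dy). -/
noncomputable def psi (β : ℝ) (n : Measure ℝ) (l : ℝ) : ℝ :=
  -l + β * l ^ 2 + ∫ y in Ioi (0 : ℝ), (Real.exp (-l * y) - 1 + l * y) ∂n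

/-- A solution of the KPP equation ∂u/∂t − (1/2)∂²u/∂x² = −ψ(u): a nonnegative function
on [0,∞) × ℝ, continuous on [0,∞) × ℝ, C^{1,2} on (0,∞) × ℝ, bounded on [0,T] × ℝ
for every T > 0, satisfying the equation for all t > 0, x ∈ ℝ. -/
def IsKPPSolution (β : ℝ) (n : Measure ℝ) (u : ℝ → ℝ → ℝ) : Prop :=
  (∀ t : ℝ, 0 ≤ t → ∀ x : ℝ, 0 ≤ u t x) ∧
  ContinuousOn (fun p : ℝ × ℝ => u p.1 p.2) (Ici (0 : ℝ) ×ˢ (univ : Set ℝ)) ∧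
  (∀ x : ℝ, ∀ t : ℝ, 0 < t → DifferentiableAt ℝ (fun s => u s x) t) ∧
  (∀ t : ℝ, 0 < t → ContDiff ℝ 2 (u t)) ∧
  (∀ T : ℝ, 0 < T → ∃ C : ℝ, ∀ t ∈ Icc (0 : ℝ) T, ∀ x : ℝ, |u t x| ≤ C) ∧
  (∀ t : ℝ, 0 < t → ∀ x : ℝ,
    deriv (fun s => u s x) t - (1 / 2) * deriv (deriv (u t)) x = -psi β n (u t x))

namespace Real

lemma exp_neg_sub_one_add_nonneg (x : ℝ) : 0 ≤ exp (-x) - 1 + x := by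
  linarith [add_one_le_exp (-x)]

lemma exp_neg_sub_one_add_le_sq {x : ℝ} (hx : 0 ≤ x) : exp (-x) - 1 + x ≤ x ^ 2 := by
  rcases le_total x 1 with hx1 | hx1
  · have := abs_exp_sub_one_sub_id_le (x := -x) (by rw [abs_neg, abs_of_nonneg hx]; exact hx1)
    rw [neg_sq] at this
    linarith [(abs_le.mp this).2]
  · nlinarith [exp_le_one_iff.mpr (neg_nonpos.mpr hx)]

lemma exp_neg_mul_sub_one_add_le {l y : ℝ} (hl : 0 ≤ l) (hy : 0 < y) :
    exp (-l * y) - 1 + l * y ≤ (l ^ 2 + l) * min (y ^ 2) y := by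
  rw [neg_mul]
  rcases le_total y 1 with hy1 | hy1
  · rw [min_eq_left (by nlinarith)]
    nlinarith [exp_neg_sub_one_add_le_sq (mul_nonneg hl hy.le)]
  · rw [min_eq_right (by nlinarith)]
    nlinarith [exp_le_one_iff.mpr (neg_nonpos.mpr (mul_nonneg hl hy.le))]

end Real

lemma integrableOn_min_sq_self {n : Measure ℝ}
    (hn : ∫⁻ y in Ioi (0 : ℝ), ENNReal.ofReal (min (y ^ 2) y) ∂n < ⊤) :
    IntegrableOn (fun y => min (y ^ 2) y) (Ioi 0) n := by
  refine ⟨by fun_prop, (hasFiniteIntegral_iff_ofReal ?_).mpr hn⟩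
  filter_upwards [ae_restrict_mem measurableSet_Ioi] with y (hy : 0 < y)
  positivity

lemma integrableOn_exp_neg_mul_sub_one_add {n : Measure ℝ}
    (hn : ∫⁻ y in Ioi (0 : ℝ), ENNReal.ofReal (min (y ^ 2) y) ∂n < ⊤) {l : ℝ} (hl : 0 ≤ l) :
    IntegrableOn (fun y => Real.exp (-l * y) - 1 + l * y) (Ioi 0) n := by
  refine ((integrableOn_min_sq_self hn).const_mul (l ^ 2 + l)).mono' (by fun_prop) ?_
  filter_upwards [ae_restrict_mem measurableSet_Ioi] with y (hy : 0 < y)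
  rw [Real.norm_of_nonneg (by simpa [neg_mul] using Real.exp_neg_sub_one_add_nonneg (l * y))]
  exact Real.exp_neg_mul_sub_one_add_le hl hy

section psi

variable {β : ℝ} {n : Measure ℝ}

lemma psi_add_self (l : ℝ) :
    psi β n l + l = β * l ^ 2 + ∫ y in Ioi (0 : ℝ), (Real.exp (-l * y) - 1 + l * y) ∂n := by
  rw [psi]; ring

lemma psi_add_self_nonneg (hβ : 0 ≤ β) (l : ℝ) : 0 ≤ psi β n l + l := by
  rw [psi_add_self]
  refine add_nonneg (by positivity) (setIntegral_nonneg measurableSet_Ioi fun y _ => ?_)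
  simpa [neg_mul] using Real.exp_neg_sub_one_add_nonneg (l * y)

lemma psi_add_self_superadditive (hβ : 0 ≤ β)
    (hn : ∫⁻ y in Ioi (0 : ℝ), ENNReal.ofReal (min (y ^ 2) y) ∂n < ⊤)
    {a b : ℝ} (ha : 0 ≤ a) (hb : 0 ≤ b) :
    (psi β n a + a) + (psi β n b + b) ≤ psi β n (a + b) + (a + b) := by
  have ia := integrableOn_exp_neg_mul_sub_one_add hn ha
  have ib := integrableOn_exp_neg_mul_sub_one_add hn hb
  have hint : (∫ y in Ioi (0 : ℝ), (Real.exp (-a * y) - 1 + a * y) ∂n)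
      + (∫ y in Ioi (0 : ℝ), (Real.exp (-b * y) - 1 + b * y) ∂n)
      ≤ ∫ y in Ioi (0 : ℝ), (Real.exp (-(a + b) * y) - 1 + (a + b) * y) ∂n := by
    rw [← integral_add ia ib]
    refine setIntegral_mono_on (ia.add ib)
      (integrableOn_exp_neg_mul_sub_one_add hn (add_nonneg ha hb)) measurableSet_Ioi
      fun y (hy : 0 < y) => ?_
    -- the gap is `(1 - e^{-ay}) (1 - e^{-by}) ≥ 0`
    have hea : Real.exp (-a * y) ≤ 1 := Real.exp_le_one_iff.mpr (by nlinarith)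
    have heb : Real.exp (-b * y) ≤ 1 := Real.exp_le_one_iff.mpr (by nlinarith)
    have hab : Real.exp (-(a + b) * y) = Real.exp (-a * y) * Real.exp (-b * y) := by
      rw [← Real.exp_add]; ring_nf
    nlinarith [mul_nonneg (sub_nonneg.2 hea) (sub_nonneg.2 heb)]
  simp only [psi_add_self]
  nlinarith [mul_nonneg (mul_nonneg hβ ha) hb]

lemma psi_add_psi_add_le (hβ : 0 ≤ β)
    (hn : ∫⁻ y in Ioi (0 : ℝ), ENNReal.ofReal (min (y ^ 2) y) ∂n < ⊤)
    {a b c : ℝ} (ha : 0 ≤ a) (hb : 0 ≤ b) (habc : a + b ≤ c) :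
    psi β n a + psi β n b + (a + b) ≤ psi β n c + c := by
  have hsplit := psi_add_self_superadditive hβ hn (add_nonneg ha hb) (sub_nonneg.2 habc)
  rw [add_sub_cancel] at hsplit
  linarith [psi_add_self_superadditive hβ hn ha hb, psi_add_self_nonneg (n := n) hβ (c - (a + b))]

end psi

lemma IsLocalMin.deriv_deriv_nonneg {f : ℝ → ℝ} {a : ℝ} (h : IsLocalMin f a)
    (hc : ContinuousAt f a) : 0 ≤ deriv (deriv f) a := by
  by_contra! hneg
  -- the second derivative test would make `a` a local maximum too, so `f` is locally constant
  have hmax := isLocalMax_of_deriv_deriv_neg hneg h.deriv_eq_zero hc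
  have hconst : f =ᶠ[𝓝 a] fun _ => f a := by
    filter_upwards [h, hmax] with x hmin hmax using le_antisymm hmax hmin
  have : deriv (deriv f) a = 0 := by
    rw [hconst.deriv.deriv_eq]; simp
  exact hneg.ne this

lemma IsMinOn.deriv_nonpos_of_right_endpoint {f : ℝ → ℝ} {a b : ℝ} (h : IsMinOn f (Icc a b) b)
    (hab : a < b) (hf : DifferentiableAt ℝ f b) : deriv f b ≤ 0 := by
  have hseg : segment ℝ b a ⊆ Icc a b := by
    rw [segment_symm, segment_eq_Icc hab.le]
  have := h.localize.hasFDerivWithinAt_nonneg hf.hasDerivAt.hasFDerivAt.hasFDerivWithinAt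
    (sub_mem_posTangentConeAt_of_segment_subset hseg)
  rw [ContinuousLinearMap.toSpanSingleton_apply, smul_eq_mul] at this
  nlinarith

lemma ContinuousOn.exists_isMinOn_strip {f : ℝ × ℝ → ℝ} {a b : ℝ}
    (hf : ContinuousOn f (Icc a b ×ˢ univ)) {g : ℝ → ℝ} (hg : Tendsto g (cocompact ℝ) atTop)
    (hfg : ∀ p ∈ Icc a b ×ˢ univ, g p.2 ≤ f p) {p₀ : ℝ × ℝ} (hp₀ : p₀ ∈ Icc a b ×ˢ univ) :
    ∃ p ∈ Icc a b ×ˢ univ, IsMinOn f (Icc a b ×ˢ univ) p := by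
  refine hf.exists_isMinOn' (isClosed_Icc.prod isClosed_univ) hp₀ ?_
  obtain ⟨K, hK, hKg⟩ := mem_cocompact.mp (hg.eventually_ge_atTop (f p₀))
  rw [eventually_inf_principal]
  refine mem_cocompact.mpr ⟨Icc a b ×ˢ K, isCompact_Icc.prod hK, fun p hp hps => ?_⟩
  have hpK : p.2 ∉ K := fun h => hp ⟨(mem_prod.mp hps).1, h⟩
  exact (hKg hpK).trans (hfg p hps)

lemma tendsto_const_mul_one_add_sq_sub_cocompact {ε : ℝ} (hε : 0 < ε) (M : ℝ) :
    Tendsto (fun x : ℝ => ε * (1 + x ^ 2) - M) (cocompact ℝ) atTop := by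
  have hsq : Tendsto (fun x : ℝ => x ^ 2) (cocompact ℝ) atTop := by
    have := (tendsto_pow_atTop two_ne_zero).comp (tendsto_norm_cocompact_atTop (E := ℝ))
    simpa only [Function.comp_def, Real.norm_eq_abs, sq_abs] using this
  exact tendsto_atTop_add_const_right _ _
    ((tendsto_atTop_add_const_left _ 1 hsq).const_mul_atTop hε)

lemma deriv_deriv_const_mul_add_mul_one_add_sq {f : ℝ → ℝ} (hf : ContDiff ℝ 2 f) (c ε x : ℝ) :
    deriv (deriv (fun y => c * f y + ε * (1 + y ^ 2))) x = c * deriv (deriv f) x + 2 * ε := by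
  have hd : deriv (fun y => c * f y + ε * (1 + y ^ 2)) = fun y => c * deriv f y + ε * (2 * y) := by
    funext y
    have := (((hf.differentiable (by norm_num)) y).hasDerivAt.const_mul c).add
      (((hasDerivAt_pow 2 y).const_add 1).const_mul ε)
    norm_num at this
    exact this.deriv
  rw [hd]
  have := (hf.differentiable_deriv_two x).hasDerivAt.const_mul c |>.add
    (((hasDerivAt_id x).const_mul 2).const_mul ε)
  exact this.deriv.trans (by ring)

noncomputable def heatOperator (w : ℝ → ℝ → ℝ) (t x : ℝ) : ℝ :=
  deriv (fun s => w s x) t - 1 / 2 * deriv (deriv (w t)) x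

lemma heatOperator_nonpos_of_isMinOn {F : ℝ → ℝ → ℝ} {T t x : ℝ}
    (hmin : IsMinOn (fun p : ℝ × ℝ => F p.1 p.2) (Icc 0 T ×ˢ univ) (t, x)) (ht : t ∈ Ioc 0 T)
    (hdt : DifferentiableAt ℝ (fun s => F s x) t) (hdx : ContinuousAt (F t) x) :
    heatOperator F t x ≤ 0 := by
  have htime : deriv (fun s => F s x) t ≤ 0 :=
    IsMinOn.deriv_nonpos_of_right_endpoint (a := 0)
      (fun s hs => isMinOn_iff.mp hmin (s, x) ⟨⟨hs.1, hs.2.trans ht.2⟩, trivial⟩) ht.1 hdt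
  have hspace : 0 ≤ deriv (deriv (F t)) x :=
    IsLocalMin.deriv_deriv_nonneg (IsMinOn.isLocalMin (s := univ)
      (fun y _ => isMinOn_iff.mp hmin (t, y) ⟨Ioc_subset_Icc_self ht, trivial⟩) univ_mem) hdx
  rw [heatOperator]
  linarith

lemma heatOperator_exp_mul_add_mul_one_add_sq {w : ℝ → ℝ → ℝ} {t x : ℝ}
    (hdt : DifferentiableAt ℝ (fun s => w s x) t) (hdx : ContDiff ℝ 2 (w t)) (μ ε : ℝ) :
    heatOperator (fun s y => Real.exp (-μ * s) * w s y + ε * (1 + y ^ 2)) t x =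
      Real.exp (-μ * t) * (heatOperator w t x - μ * w t x) - ε := by
  have htime : HasDerivAt (fun s => Real.exp (-μ * s) * w s x + ε * (1 + x ^ 2))
      (Real.exp (-μ * t) * (-μ) * w t x + Real.exp (-μ * t) * deriv (fun s => w s x) t) t :=
    ((((hasDerivAt_id' t).const_mul (-μ)).exp.mul hdt.hasDerivAt).add_const
      (ε * (1 + x ^ 2))).congr_deriv (by ring)
  simp only [heatOperator, htime.deriv, deriv_deriv_const_mul_add_mul_one_add_sq hdx]
  ring

lemma exp_mul_add_pos_of_heatOperator_ge {w : ℝ → ℝ → ℝ} {T L M ε : ℝ} (hε : 0 < ε)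
    (hcont : ContinuousOn (fun p : ℝ × ℝ => w p.1 p.2) (Icc 0 T ×ˢ univ))
    (hbdd : ∀ t ∈ Icc 0 T, ∀ x, M ≤ w t x)
    (hdt : ∀ t ∈ Ioc 0 T, ∀ x, DifferentiableAt ℝ (fun s => w s x) t)
    (hdx : ∀ t ∈ Ioc 0 T, ContDiff ℝ 2 (w t))
    (hsuper : ∀ t ∈ Ioc 0 T, ∀ x, w t x < 0 → L * w t x ≤ heatOperator w t x)
    (h0 : ∀ x, 0 ≤ w 0 x) :
    ∀ t ∈ Icc 0 T, ∀ x, 0 < Real.exp (-(|L| + 2) * t) * w t x + ε * (1 + x ^ 2) := by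
  set μ := |L| + 2
  set F : ℝ → ℝ → ℝ := fun s y => Real.exp (-μ * s) * w s y + ε * (1 + y ^ 2) with hF
  by_contra! ⟨t₁, ht₁, x₁, hF₁⟩
  have hFlow : ∀ p ∈ Icc 0 T ×ˢ univ, ε * (1 + p.2 ^ 2) - |M| ≤ F p.1 p.2 := by
    rintro ⟨t, x⟩ ⟨ht, -⟩
    have hexp_le_one : Real.exp (-μ * t) ≤ 1 :=
      Real.exp_le_one_iff.mpr (by nlinarith [ht.1, abs_nonneg L])
    nlinarith [hbdd t ht x, Real.exp_pos (-μ * t), neg_abs_le M, abs_nonneg M]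
  have hFcont : ContinuousOn (fun p : ℝ × ℝ => F p.1 p.2) (Icc 0 T ×ˢ univ) :=
    (Continuous.continuousOn (by fun_prop)).mul hcont |>.add (by fun_prop)
  obtain ⟨⟨t, x⟩, ⟨ht, -⟩, hmin⟩ := hFcont.exists_isMinOn_strip
    (tendsto_const_mul_one_add_sq_sub_cocompact hε |M|) hFlow (p₀ := (t₁, x₁)) ⟨ht₁, trivial⟩
  have hFt : F t x ≤ 0 := (isMinOn_iff.mp hmin (t₁, x₁) ⟨ht₁, trivial⟩).trans hF₁
  have hpen : 0 < ε * (1 + x ^ 2) := by positivity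
  have htpos : 0 < t := by
    refine ht.1.lt_of_ne fun h => ?_
    subst h
    simp only [hF, mul_zero, Real.exp_zero, one_mul] at hFt
    linarith [h0 x]
  have hw : w t x < 0 := by
    by_contra! h
    linarith [mul_nonneg (Real.exp_pos (-μ * t)).le h]
  have htT : t ∈ Ioc 0 T := ⟨htpos, ht.2⟩
  have hdtx := hdt t htT x
  have hdxt := (hdx t htT).continuous
  have hop : heatOperator F t x ≤ 0 :=
    heatOperator_nonpos_of_isMinOn hmin htT (by fun_prop) (by fun_prop)
  rw [hF, heatOperator_exp_mul_add_mul_one_add_sq hdtx (hdx t htT)] at hop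
  have hsup : |L| * w t x ≤ heatOperator w t x :=
    (mul_le_mul_of_nonpos_right (le_abs_self L) hw.le).trans (hsuper t htT x hw)
  -- as `μ = |L| + 2`: `e (H w - μ w) ≥ -2 e w ≥ 2 ε (1 + x²) > ε`, contradicting `hop`
  nlinarith [mul_le_mul_of_nonneg_left hsup (Real.exp_pos (-μ * t)).le,
    mul_nonneg hε.le (sq_nonneg x)]

theorem nonneg_of_heatOperator_ge {w : ℝ → ℝ → ℝ} {T L M : ℝ}
    (hcont : ContinuousOn (fun p : ℝ × ℝ => w p.1 p.2) (Icc 0 T ×ˢ univ))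
    (hbdd : ∀ t ∈ Icc 0 T, ∀ x, M ≤ w t x)
    (hdt : ∀ t ∈ Ioc 0 T, ∀ x, DifferentiableAt ℝ (fun s => w s x) t)
    (hdx : ∀ t ∈ Ioc 0 T, ContDiff ℝ 2 (w t))
    (hsuper : ∀ t ∈ Ioc 0 T, ∀ x, w t x < 0 → L * w t x ≤ heatOperator w t x)
    (h0 : ∀ x, 0 ≤ w 0 x) :
    ∀ t ∈ Icc 0 T, ∀ x, 0 ≤ w t x := by
  intro t ht x
  have hx : 0 < 1 + x ^ 2 := by positivity
  refine nonneg_of_mul_nonneg_right ?_ (Real.exp_pos (-(|L| + 2) * t))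
  refine le_of_forall_pos_lt_add fun ε hε => ?_
  have := exp_mul_add_pos_of_heatOperator_ge (div_pos hε hx) hcont hbdd hdt hdx hsuper h0 t ht x
  rwa [div_mul_cancel₀ _ hx.ne'] at this

lemma heatOperator_add_sub {u₁ u₂ u₃ : ℝ → ℝ → ℝ} {t x : ℝ}
    (hdt₁ : DifferentiableAt ℝ (fun s => u₁ s x) t) (hdt₂ : DifferentiableAt ℝ (fun s => u₂ s x) t)
    (hdt₃ : DifferentiableAt ℝ (fun s => u₃ s x) t)
    (hdx₁ : ContDiff ℝ 2 (u₁ t)) (hdx₂ : ContDiff ℝ 2 (u₂ t)) (hdx₃ : ContDiff ℝ 2 (u₃ t)) :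
    heatOperator (fun t x => u₁ t x + u₂ t x - u₃ t x) t x =
      heatOperator u₁ t x + heatOperator u₂ t x - heatOperator u₃ t x := by
  have hderiv_deriv : ∀ f : ℝ → ℝ, deriv (deriv f) = iteratedDeriv 2 f := fun f => by
    simp only [iteratedDeriv_succ, iteratedDeriv_zero]
  have hspace : deriv (deriv (fun y => u₁ t y + u₂ t y - u₃ t y)) x =
      deriv (deriv (u₁ t)) x + deriv (deriv (u₂ t)) x - deriv (deriv (u₃ t)) x := by
    simp only [hderiv_deriv]
    rw [iteratedDeriv_fun_sub (by fun_prop) (by fun_prop),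
      iteratedDeriv_fun_add (by fun_prop) (by fun_prop)]
  have htime : deriv (fun s => u₁ s x + u₂ s x - u₃ s x) t =
      deriv (fun s => u₁ s x) t + deriv (fun s => u₂ s x) t - deriv (fun s => u₃ s x) t :=
    ((hdt₁.hasDerivAt.add hdt₂.hasDerivAt).sub hdt₃.hasDerivAt).deriv
  simp only [heatOperator, hspace, htime]
  ring

lemma IsKPPSolution.add_sub_le_heatOperator {β : ℝ} (hβ : 0 ≤ β) {n : Measure ℝ}
    (hn : ∫⁻ y in Ioi (0 : ℝ), ENNReal.ofReal (min (y ^ 2) y) ∂n < ⊤) {u₁ u₂ u₃ : ℝ → ℝ → ℝ}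
    (hu₁ : IsKPPSolution β n u₁) (hu₂ : IsKPPSolution β n u₂) (hu₃ : IsKPPSolution β n u₃)
    {t x : ℝ} (ht : 0 < t) (hle : u₁ t x + u₂ t x ≤ u₃ t x) :
    u₁ t x + u₂ t x - u₃ t x ≤ heatOperator (fun t x => u₁ t x + u₂ t x - u₃ t x) t x := by
  obtain ⟨hnn₁, -, hdt₁, hdx₁, -, hpde₁⟩ := hu₁
  obtain ⟨hnn₂, -, hdt₂, hdx₂, -, hpde₂⟩ := hu₂
  obtain ⟨-, -, hdt₃, hdx₃, -, hpde₃⟩ := hu₃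
  rw [heatOperator_add_sub (hdt₁ x t ht) (hdt₂ x t ht) (hdt₃ x t ht) (hdx₁ t ht) (hdx₂ t ht)
    (hdx₃ t ht)]
  have := psi_add_psi_add_le hβ hn (hnn₁ t ht.le x) (hnn₂ t ht.le x) hle
  simp only [heatOperator, hpde₁ t ht x, hpde₂ t ht x, hpde₃ t ht x]
  linarith

theorem kpp_subadditive
    (β : ℝ) (hβ : 0 ≤ β) (n : Measure ℝ)
    (hn : ∫⁻ y in Ioi (0 : ℝ), ENNReal.ofReal (min (y ^ 2) y) ∂n < ⊤)
    (u₁ u₂ u₃ : ℝ → ℝ → ℝ)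
    (hu₁ : IsKPPSolution β n u₁) (hu₂ : IsKPPSolution β n u₂) (hu₃ : IsKPPSolution β n u₃)
    (hinit : ∀ x : ℝ, u₃ 0 x ≤ u₁ 0 x + u₂ 0 x) :
    ∀ t : ℝ, 0 < t → ∀ x : ℝ, u₃ t x ≤ u₁ t x + u₂ t x := by
  intro T hT x
  have hsuper : ∀ t ∈ Ioc 0 T, ∀ x, u₁ t x + u₂ t x - u₃ t x < 0 →
      1 * (u₁ t x + u₂ t x - u₃ t x) ≤ heatOperator (fun t x => u₁ t x + u₂ t x - u₃ t x) t x :=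
    fun t ht x hneg => (one_mul _).trans_le <|
      IsKPPSolution.add_sub_le_heatOperator hβ hn hu₁ hu₂ hu₃ ht.1 (by linarith)
  obtain ⟨hnn₁, hcont₁, hdt₁, hdx₁, -, -⟩ := hu₁
  obtain ⟨hnn₂, hcont₂, hdt₂, hdx₂, -, -⟩ := hu₂
  obtain ⟨-, hcont₃, hdt₃, hdx₃, hbdd₃, -⟩ := hu₃
  obtain ⟨C, hC⟩ := hbdd₃ T hT
  have hstrip : Icc 0 T ×ˢ univ ⊆ Ici (0 : ℝ) ×ˢ (univ : Set ℝ) :=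
    prod_mono Icc_subset_Ici_self le_rfl
  refine sub_nonneg.mp <| nonneg_of_heatOperator_ge
    (w := fun t x => u₁ t x + u₂ t x - u₃ t x) (M := -C)
    (((hcont₁.add hcont₂).sub hcont₃).mono hstrip)
    (fun t ht x => by linarith [hnn₁ t ht.1 x, hnn₂ t ht.1 x, (abs_le.mp (hC t ht x)).2])
    (fun t ht x => ((hdt₁ x t ht.1).add (hdt₂ x t ht.1)).sub (hdt₃ x t ht.1))
    (fun t ht => ((hdx₁ t ht.1).add (hdx₂ t ht.1)).sub (hdx₃ t ht.1))
    hsuper (fun x => sub_nonneg.mpr (hinit x)) T ⟨hT.le, le_rfl⟩ x
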